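/- Let T be a finite rooted tree with a friendly labeling function L : G → 𝓛, and let e be an interior edge of T. If (l_1, m, n_1) and (l_2, m, n_2) are consistent labelings of T (with the same label m on the edge e), then (l_1, m, n_2) and (l_2, m, n_1) are also consistent labelings of T, and the quadratic binomial q_{(l_1,m,n_1)} q_{(l_2,m,n_2)} − q_{(l_1,m,n_2)} q_{(l_2,m,n_1)} lies in the toric ideal I_{T,L}. -/

import Mathlib

/-!
Friendliness lets one replace the group element `g(v)` on an edge `v` by any element with the
same label without changing a label below `v`: at a vertex with `k` children,
`(k+1)`-friendliness redistributes the new value over the children, and one recurses into their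
subtrees. Starting from leaf assignments `g₁, g₂` realising `l₁, l₂`, this makes `g₁(e) = g₂(e)`
while keeping `l₁` below `e`; grafting `g₁` below `e` onto `g₂` then realises `(l₁, m, n₂)`, since
the sums above `e` see the subtree of `e` only through `g(e)`. Edge by edge, the two monomials of
the binomial have the same two factors.
-/

open MvPolynomial

attribute [local instance] Classical.propDecidable

/-- The set `Z_m ⊆ G^m` of tuples with `g_1 + ⋯ + g_{m-1} = g_m`. -/
def ZSet (G : Type) [AddCommGroup G] (m : ℕ) : Set (Fin m → G) :=
  {g | (∑ i ∈ Finset.univ.filter fun i : Fin m => (i : ℕ) < m - 1, g i) =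
       ∑ i ∈ Finset.univ.filter fun i : Fin m => ¬ (i : ℕ) < m - 1, g i}

/-- A labeling function `L : G → 𝓛` is `m`-friendly if for every tuple in `Z_m`, every
value with the same label at a coordinate can be realized at that coordinate by another
tuple in `Z_m` with the same label vector. -/
def IsMFriendly {G 𝓛 : Type} [AddCommGroup G] (L : G → 𝓛) (m : ℕ) : Prop :=
  ∀ g ∈ ZSet G m, ∀ i : Fin m, ∀ h : G, L h = L (g i) →
    ∃ g' ∈ ZSet G m, (∀ j, L (g' j) = L (g j)) ∧ g' i = h

/-- A labeling function is friendly if it is `m`-friendly for all `m ≥ 3`. -/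
def Friendly {G 𝓛 : Type} [AddCommGroup G] (L : G → 𝓛) : Prop :=
  ∀ m, 3 ≤ m → IsMFriendly L m

/-- A finite rooted tree, given by a parent function on a finite vertex set. -/
structure PhyloTree where
  V : Type
  fintypeV : Fintype V
  root : V
  parent : V → V
  parent_root : parent root = root
  reaches_root : ∀ v, ∃ n : ℕ, parent^[n] v = root

attribute [instance] PhyloTree.fintypeV

namespace PhyloTree

variable (T : PhyloTree)

/-- A vertex is a leaf if it has no children. -/
def IsLeaf (v : T.V) : Prop := ∀ u, T.parent u = v → u = v

/-- The type of leaves of `T`. -/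
def Leaf : Type := {v : T.V // T.IsLeaf v}

noncomputable instance : Fintype T.Leaf :=
  have : DecidablePred T.IsLeaf := Classical.decPred _
  Subtype.fintype _

/-- `u` is a (weak) descendant of `v`. -/
def Desc (u v : T.V) : Prop := ∃ n : ℕ, T.parent^[n] u = v

/-- The edges of `T` are indexed by its vertices: a vertex `v` indexes the edge from
`parent v` to `v`, and the root indexes the extra pendant root edge `e_r`.
`leavesBelow v` is the set `Λ(e)` of leaves below the edge indexed by `v`. -/
noncomputable def leavesBelow (v : T.V) : Finset T.Leaf :=
  Finset.univ.filter fun l => T.Desc l.1 v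

/-- An edge is interior if its lower endpoint is neither a leaf nor the root
(the latter excluding the pendant root edge). -/
def InteriorEdge (e : T.V) : Prop := ¬ T.IsLeaf e ∧ e ≠ T.root

/-- The edge set of the subtree `T_{e,-}`: the edge `e` together with all edges below it. -/
def Eminus (e : T.V) : Set T.V := {e' | T.Desc e' e}

/-- The edge set of the subtree `T_{e,+}`: the edge `e` together with all edges not in `T_{e,-}`. -/
def Eplus (e : T.V) : Set T.V := {e' | e' = e ∨ ¬ T.Desc e' e}

theorem mem_Eminus_self (e : T.V) : e ∈ T.Eminus e := ⟨0, rfl⟩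

theorem mem_Eplus_self (e : T.V) : e ∈ T.Eplus e := Or.inl rfl

variable {G 𝓛 : Type} [AddCommGroup G] [Fintype G]

/-- `g(e)`: the sum of the group elements at the leaves below the edge `e`. -/
noncomputable def gsum (g : T.Leaf → G) (e : T.V) : G := ∑ l ∈ T.leavesBelow e, g l

/-- The consistent labelings of the subtree with edge set `S`. -/
def consLab (L : G → 𝓛) (S : Set T.V) : Set (↥S → 𝓛) :=
  Set.range fun g : T.Leaf → G => fun e' : ↥S => L (T.gsum g e'.1)

/-- The consistent labelings of the whole tree `T`, i.e. the image of `L^T`. -/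
def consLabFull (L : G → 𝓛) : Set (T.V → 𝓛) :=
  Set.range fun g : T.Leaf → G => fun e : T.V => L (T.gsum g e)

/-- The toric ideal of the subtree with edge set `S` (in Fourier coordinates `q_λ`,
`λ` a consistent labeling): the kernel of the monomial map `q_λ ↦ ∏_e a^{(e)}_{λ(e)}`. -/
noncomputable def toricIdeal (L : G → 𝓛) (S : Set T.V) :
    Ideal (MvPolynomial ↥(T.consLab L S) ℂ) :=
  RingHom.ker (aeval (R := ℂ)
    fun μ : ↥(T.consLab L S) => ∏ e' : ↥S, (X (e', μ.1 e') : MvPolynomial (↥S × 𝓛) ℂ))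

/-- The toric ideal `I_{T,L}` of the tree `T`. -/
noncomputable def toricIdealFull (L : G → 𝓛) :
    Ideal (MvPolynomial ↥(T.consLabFull L) ℂ) :=
  RingHom.ker (aeval (R := ℂ)
    fun μ : ↥(T.consLabFull L) => ∏ e : T.V, (X (e, μ.1 e) : MvPolynomial (T.V × 𝓛) ℂ))

/-- Glue a labeling of `T_{e,-}` and a labeling of `T_{e,+}` into a labeling of `T`. -/
noncomputable def glue (e : T.V) (μ : ↥(T.Eminus e) → 𝓛) (ν : ↥(T.Eplus e) → 𝓛) :
    T.V → 𝓛 :=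
  fun e' => if h : T.Desc e' e then μ ⟨e', h⟩ else ν ⟨e', Or.inr h⟩

/-- `mix e λ₁ λ₂` agrees with `λ₁` on `T_{e,-}` and with `λ₂` on the rest of `T`. -/
noncomputable def mix (e : T.V) (f g : T.V → 𝓛) : T.V → 𝓛 :=
  fun e' => if T.Desc e' e then f e' else g e'

end PhyloTree

theorem mem_ZSet_succ_iff {G : Type} [AddCommGroup G] {k : ℕ} {g : Fin (k + 1) → G} :
    g ∈ ZSet G (k + 1) ↔ ∑ i : Fin k, g i.castSucc = g (Fin.last k) := by
  simp [ZSet, Finset.sum_filter, Fin.sum_univ_castSucc, fun i : Fin k => not_le.2 i.isLt]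

section Friendly

variable {G 𝓛 : Type} [AddCommGroup G] {L : G → 𝓛}

theorem Friendly.exists_fin_sum_eq (hL : Friendly L) {k : ℕ} (hk : 2 ≤ k) (x : Fin k → G)
    {h : G} (hh : L h = L (∑ i, x i)) :
    ∃ y : Fin k → G, (∀ i, L (y i) = L (x i)) ∧ ∑ i, y i = h := by
  obtain ⟨g, hgZ, hgL, hg⟩ := hL (k + 1) (by omega) (Fin.snoc x (∑ i, x i))
    (mem_ZSet_succ_iff.2 (by simp)) (Fin.last k) h (by simpa using hh)
  refine ⟨fun i => g i.castSucc, fun i => by simpa using hgL i.castSucc, ?_⟩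
  rw [mem_ZSet_succ_iff.1 hgZ, hg]

theorem Friendly.exists_sum_eq {ι : Type*} (hL : Friendly L) {s : Finset ι} (hs : s.Nonempty)
    (x : ι → G) {h : G} (hh : L h = L (∑ i ∈ s, x i)) :
    ∃ y : ι → G, (∀ i ∈ s, L (y i) = L (x i)) ∧ ∑ i ∈ s, y i = h := by
  obtain hcard | hcard : s.card = 1 ∨ 2 ≤ s.card := by have := hs.card_pos; omega
  · obtain ⟨a, rfl⟩ := Finset.card_eq_one.1 hcard
    exact ⟨fun _ => h, by simpa using hh, by simp⟩
  · set σ := s.equivFin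
    have hsum : ∀ f : ι → G, ∑ j, f (σ.symm j) = ∑ i ∈ s, f i := fun f =>
      (σ.symm.sum_comp fun i => f i).trans (s.sum_coe_sort f)
    obtain ⟨y, hyL, hy⟩ :=
      hL.exists_fin_sum_eq hcard (fun j => x (σ.symm j)) (h := h) (by rwa [hsum])
    refine ⟨fun i => if hi : i ∈ s then y (σ ⟨i, hi⟩) else 0, fun i hi => ?_, ?_⟩
    · simpa [hi] using hyL (σ ⟨i, hi⟩)
    · rw [← hsum, ← hy]
      simp

end Friendly

namespace PhyloTree

variable (T : PhyloTree)

theorem desc_refl (v : T.V) : T.Desc v v := ⟨0, rfl⟩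

variable {T}

theorem desc_trans {u v w : T.V} (h1 : T.Desc u v) (h2 : T.Desc v w) : T.Desc u w := by
  obtain ⟨n, rfl⟩ := h1
  obtain ⟨m, rfl⟩ := h2
  exact ⟨m + n, Function.iterate_add_apply _ _ _ _⟩

theorem desc_antisymm {u v : T.V} (h1 : T.Desc u v) (h2 : T.Desc v u) : u = v := by
  obtain ⟨n, hn⟩ := h1
  obtain ⟨m, hm⟩ := h2
  rcases Nat.eq_zero_or_pos (m + n) with h0 | hpos
  · rwa [show n = 0 by omega] at hn
  -- `u` is a periodic point of `parent`; as its orbit reaches the fixed point `root`, `u = root`.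
  have hper : Function.IsPeriodicPt T.parent (m + n) u := by
    rw [Function.IsPeriodicPt, Function.IsFixedPt, Function.iterate_add_apply, hn, hm]
  obtain ⟨N, hN⟩ := T.reaches_root u
  have hu : u = T.root := by
    have h := hper.mul_const (N + 1)
    have hN_le : N ≤ (m + n) * (N + 1) := by nlinarith
    rw [Function.IsPeriodicPt, Function.IsFixedPt,
      show (m + n) * (N + 1) = ((m + n) * (N + 1) - N) + N by omega,
      Function.iterate_add_apply, hN, Function.iterate_fixed T.parent_root] at h
    exact h.symm
  subst hu
  rw [← hn, Function.iterate_fixed T.parent_root]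

theorem desc_or_desc_of_desc {u a b : T.V} (ha : T.Desc u a) (hb : T.Desc u b) :
    T.Desc a b ∨ T.Desc b a := by
  obtain ⟨n, rfl⟩ := ha
  obtain ⟨m, rfl⟩ := hb
  rcases le_total n m with h | h
  · exact Or.inl ⟨m - n, by rw [← Function.iterate_add_apply, Nat.sub_add_cancel h]⟩
  · exact Or.inr ⟨n - m, by rw [← Function.iterate_add_apply, Nat.sub_add_cancel h]⟩

theorem eq_of_desc_of_isLeaf {u v : T.V} (hv : T.IsLeaf v) (h : T.Desc u v) : u = v := by
  obtain ⟨n, hn⟩ := h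
  induction n with
  | zero => exact hn
  | succ n ih => exact ih (hv _ (by rwa [Function.iterate_succ_apply'] at hn))

variable (T) in
noncomputable def children (v : T.V) : Finset T.V :=
  Finset.univ.filter fun c => T.parent c = v ∧ c ≠ v

theorem mem_children {v c : T.V} : c ∈ T.children v ↔ T.parent c = v ∧ c ≠ v := by
  simp [children]

theorem desc_of_mem_children {v c : T.V} (hc : c ∈ T.children v) : T.Desc c v :=
  ⟨1, (mem_children.1 hc).1⟩

theorem not_desc_of_mem_children {v c : T.V} (hc : c ∈ T.children v) : ¬ T.Desc v c :=
  fun h => (mem_children.1 hc).2 (desc_antisymm (desc_of_mem_children hc) h)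

theorem eq_of_mem_children_of_desc {v c₁ c₂ u : T.V} (hc₁ : c₁ ∈ T.children v)
    (hc₂ : c₂ ∈ T.children v) (h₁ : T.Desc u c₁) (h₂ : T.Desc u c₂) : c₁ = c₂ := by
  -- A child strictly below a sibling would lie below their common parent `v`.
  have key : ∀ {a b}, a ∈ T.children v → b ∈ T.children v → T.Desc a b → a = b := by
    intro a b ha hb ⟨j, hj⟩
    cases j with
    | zero => exact hj
    | succ j =>
      rw [Function.iterate_succ_apply, (mem_children.1 ha).1] at hj
      exact absurd ⟨j, hj⟩ (not_desc_of_mem_children hb)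
  rcases desc_or_desc_of_desc h₁ h₂ with h | h
  · exact key hc₁ hc₂ h
  · exact (key hc₂ hc₁ h).symm

theorem exists_mem_children_desc {u v : T.V} (h : T.Desc u v) (hne : u ≠ v) :
    ∃ c ∈ T.children v, T.Desc u c := by
  obtain ⟨n, hn⟩ := h
  induction n with
  | zero => exact absurd hn hne
  | succ n ih =>
    rw [Function.iterate_succ_apply'] at hn
    by_cases hv : T.parent^[n] u = v
    · exact ih hv
    · exact ⟨_, mem_children.2 ⟨hn, hv⟩, n, rfl⟩

theorem children_nonempty {v : T.V} (hv : ¬ T.IsLeaf v) : (T.children v).Nonempty := by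
  simp only [IsLeaf, not_forall] at hv
  obtain ⟨u, hu, hne⟩ := hv
  exact ⟨u, mem_children.2 ⟨hu, hne⟩⟩

variable (T) in
theorem wellFounded_mem_children : WellFounded fun c v : T.V => c ∈ T.children v := by
  refine Subrelation.wf (fun {c v} hc => ?_)
    (measure fun v => (Finset.univ.filter (T.Desc · v)).card).wf
  refine Finset.card_lt_card ⟨fun u hu => ?_, fun hsub => ?_⟩
  · simp only [Finset.mem_filter, Finset.mem_univ, true_and] at hu ⊢
    exact desc_trans hu (desc_of_mem_children hc)
  · exact not_desc_of_mem_children hc (by simpa using hsub (by simpa using T.desc_refl v))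

theorem mem_leavesBelow {v : T.V} {l : T.Leaf} : l ∈ T.leavesBelow v ↔ T.Desc l.1 v := by
  simp [leavesBelow]

theorem leavesBelow_of_isLeaf {v : T.V} (hv : T.IsLeaf v) : T.leavesBelow v = {⟨v, hv⟩} := by
  ext l
  rw [mem_leavesBelow]
  exact ⟨fun h => Finset.mem_singleton.2 (Subtype.ext (eq_of_desc_of_isLeaf hv h)),
    fun h => Finset.mem_singleton.1 h ▸ T.desc_refl v⟩

theorem leavesBelow_eq_biUnion_children {v : T.V} (hv : ¬ T.IsLeaf v) :
    T.leavesBelow v = (T.children v).biUnion T.leavesBelow := by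
  ext l
  simp only [Finset.mem_biUnion, mem_leavesBelow]
  refine ⟨fun h => exists_mem_children_desc h fun hl => hv (hl ▸ l.2), ?_⟩
  rintro ⟨c, hc, h⟩
  exact desc_trans h (desc_of_mem_children hc)

theorem pairwiseDisjoint_leavesBelow_children (v : T.V) :
    (T.children v : Set T.V).PairwiseDisjoint T.leavesBelow := by
  intro c₁ hc₁ c₂ hc₂ hne
  refine Finset.disjoint_left.2 fun l hl₁ hl₂ => hne ?_
  exact eq_of_mem_children_of_desc hc₁ hc₂ (mem_leavesBelow.1 hl₁) (mem_leavesBelow.1 hl₂)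

section Gsum

variable {G 𝓛 : Type} [AddCommGroup G]

theorem gsum_congr {g g' : T.Leaf → G} {v : T.V} (h : ∀ l ∈ T.leavesBelow v, g' l = g l) :
    T.gsum g' v = T.gsum g v :=
  Finset.sum_congr rfl h

theorem gsum_eq_sum_children (g : T.Leaf → G) {v : T.V} (hv : ¬ T.IsLeaf v) :
    T.gsum g v = ∑ c ∈ T.children v, T.gsum g c := by
  rw [gsum, leavesBelow_eq_biUnion_children hv,
    Finset.sum_biUnion (pairwiseDisjoint_leavesBelow_children v)]
  rfl

theorem gsum_of_isLeaf (g : T.Leaf → G) {v : T.V} (hv : T.IsLeaf v) :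
    T.gsum g v = g ⟨v, hv⟩ := by
  rw [gsum, leavesBelow_of_isLeaf hv]
  exact Finset.sum_singleton _ _

variable (T) in
noncomputable def graft (v : T.V) (g' g : T.Leaf → G) : T.Leaf → G :=
  fun l => if T.Desc l.1 v then g' l else g l

theorem gsum_graft_of_desc {v u : T.V} (g' g : T.Leaf → G) (hu : T.Desc u v) :
    T.gsum (T.graft v g' g) u = T.gsum g' u :=
  gsum_congr fun _ hl => if_pos (desc_trans (mem_leavesBelow.1 hl) hu)

theorem gsum_graft_of_not_desc {v u : T.V} {g' g : T.Leaf → G}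
    (hv : T.gsum g' v = T.gsum g v) (hu : ¬ T.Desc u v) :
    T.gsum (T.graft v g' g) u = T.gsum g u := by
  by_cases hvu : T.Desc v u
  · have hsub : T.leavesBelow v ⊆ T.leavesBelow u := fun l hl =>
      mem_leavesBelow.2 (desc_trans (mem_leavesBelow.1 hl) hvu)
    have hout : ∀ l ∈ T.leavesBelow u \ T.leavesBelow v, T.graft v g' g l = g l :=
      fun l hl => if_neg fun h => (Finset.mem_sdiff.1 hl).2 (mem_leavesBelow.2 h)
    rw [gsum, gsum, ← Finset.sum_sdiff hsub, ← Finset.sum_sdiff hsub (f := g),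
      Finset.sum_congr rfl hout]
    exact congrArg _ ((gsum_graft_of_desc g' g (T.desc_refl v)).trans hv)
  · refine gsum_congr fun l hl => if_neg fun hlv => ?_
    exact (desc_or_desc_of_desc (mem_leavesBelow.1 hl) hlv).elim hu hvu

theorem exists_gsum_eq_of_label_eq {L : G → 𝓛} (hL : Friendly L) (v : T.V) (g : T.Leaf → G)
    (h : G) (hh : L h = L (T.gsum g v)) :
    ∃ g' : T.Leaf → G,
      T.gsum g' v = h ∧ ∀ u, T.Desc u v → L (T.gsum g' u) = L (T.gsum g u) := by
  induction v using (T.wellFounded_mem_children).induction generalizing h with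
  | _ v ih =>
  by_cases hv : T.IsLeaf v
  · refine ⟨fun _ => h, gsum_of_isLeaf _ hv, fun u hu => ?_⟩
    rw [eq_of_desc_of_isLeaf hv hu, gsum_of_isLeaf _ hv, hh]
  obtain ⟨t, htL, ht⟩ := hL.exists_sum_eq (children_nonempty hv) (T.gsum g)
    (hh.trans (congrArg L (gsum_eq_sum_children g hv)))
  choose! g' hg'v hg'L using fun c hc => ih c hc (t c) (htL c hc)
  -- Each leaf lies below at most one child, so only one summand survives.
  let g'' : T.Leaf → G := fun l => ∑ c ∈ T.children v, if T.Desc l.1 c then g' c l else 0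
  have hg'' : ∀ c ∈ T.children v, ∀ u, T.Desc u c → T.gsum g'' u = T.gsum (g' c) u := by
    intro c hc u hu
    refine gsum_congr fun l hl => ?_
    have hlc := desc_trans (mem_leavesBelow.1 hl) hu
    refine (Finset.sum_eq_single_of_mem c hc fun c' hc' hne => ?_).trans (if_pos hlc)
    exact if_neg fun hlc' => hne (eq_of_mem_children_of_desc hc' hc hlc' hlc)
  have hsum : T.gsum g'' v = h := by
    rw [gsum_eq_sum_children _ hv, ← ht]
    exact Finset.sum_congr rfl fun c hc =>
      (hg'' c hc c (T.desc_refl c)).trans (hg'v c hc)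
  refine ⟨g'', hsum, fun u hu => ?_⟩
  by_cases huv : u = v
  · rw [huv, hsum, hh]
  obtain ⟨c, hc, huc⟩ := exists_mem_children_desc hu huv
  rw [hg'' c hc u huc, hg'L c hc u huc]

theorem mix_mem_consLabFull {L : G → 𝓛} (hL : Friendly L) {e : T.V} {l₁ l₂ : T.V → 𝓛}
    (h₁ : l₁ ∈ T.consLabFull L) (h₂ : l₂ ∈ T.consLabFull L) (he : l₁ e = l₂ e) :
    T.mix e l₁ l₂ ∈ T.consLabFull L := by
  obtain ⟨g₁, rfl⟩ := h₁
  obtain ⟨g₂, rfl⟩ := h₂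
  obtain ⟨g₁', hg₁'e, hg₁'L⟩ := exists_gsum_eq_of_label_eq hL e g₁ (T.gsum g₂ e) he.symm
  refine ⟨T.graft e g₁' g₂, funext fun u => ?_⟩
  by_cases hu : T.Desc u e
  · simp only [mix, if_pos hu, gsum_graft_of_desc g₁' g₂ hu, hg₁'L u hu]
  · simp only [mix, if_neg hu, gsum_graft_of_not_desc hg₁'e hu]

end Gsum

theorem X_mul_X_sub_X_mul_X_mem_toricIdealFull {G 𝓛 : Type} [AddCommGroup G] {L : G → 𝓛}
    {p₁ p₂ q₁ q₂ : T.consLabFull L}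
    (h : ∀ e, (q₁.1 e = p₁.1 e ∧ q₂.1 e = p₂.1 e) ∨ (q₁.1 e = p₂.1 e ∧ q₂.1 e = p₁.1 e)) :
    X p₁ * X p₂ - X q₁ * X q₂ ∈ T.toricIdealFull L := by
  rw [toricIdealFull, RingHom.mem_ker, map_sub, map_mul, map_mul, aeval_X, aeval_X, aeval_X,
    aeval_X, ← Finset.prod_mul_distrib, ← Finset.prod_mul_distrib, sub_eq_zero]
  refine Finset.prod_congr rfl fun e _ => ?_
  rcases h e with ⟨h₁, h₂⟩ | ⟨h₁, h₂⟩
  · rw [h₁, h₂]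
  · rw [h₁, h₂, mul_comm]

end PhyloTree

theorem quad_mem_toricIdeal_general (T : PhyloTree) {G 𝓛 : Type} [AddCommGroup G]
    (L : G → 𝓛) (hL : Friendly L) (e : T.V)
    (l1 l2 : T.V → 𝓛) (h1 : l1 ∈ T.consLabFull L) (h2 : l2 ∈ T.consLabFull L)
    (hagree : l1 e = l2 e) :
    ∃ (h3 : T.mix e l1 l2 ∈ T.consLabFull L) (h4 : T.mix e l2 l1 ∈ T.consLabFull L),
      (X (⟨l1, h1⟩ : ↥(T.consLabFull L)) * X (⟨l2, h2⟩ : ↥(T.consLabFull L)) -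
        X (⟨T.mix e l1 l2, h3⟩ : ↥(T.consLabFull L)) *
        X (⟨T.mix e l2 l1, h4⟩ : ↥(T.consLabFull L)))
        ∈ T.toricIdealFull L := by
  refine ⟨PhyloTree.mix_mem_consLabFull hL h1 h2 hagree,
    PhyloTree.mix_mem_consLabFull hL h2 h1 hagree.symm,
    PhyloTree.X_mul_X_sub_X_mul_X_mem_toricIdealFull fun u => ?_⟩
  by_cases hu : T.Desc u e
  · exact Or.inl ⟨if_pos hu, if_pos hu⟩
  · exact Or.inr ⟨if_neg hu, if_neg hu⟩

/-- **Lemma (the quadrics `Quad(e,T)` are invariants).** For a friendly labeling `L` and an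
interior edge `e`, if `(l₁,m,n₁)` and `(l₂,m,n₂)` are consistent labelings of `T` sharing the
label `m` on `e`, then the swapped labelings `(l₁,m,n₂)` and `(l₂,m,n₁)` are consistent, and
the quadratic binomial `q_{(l₁,m,n₁)} q_{(l₂,m,n₂)} − q_{(l₁,m,n₂)} q_{(l₂,m,n₁)}` lies in
the toric ideal `I_{T,L}`. -/
theorem quad_mem_toricIdeal (T : PhyloTree) {G 𝓛 : Type} [AddCommGroup G] [Fintype G]
    (L : G → 𝓛) (hL : Friendly L) (e : T.V) (he : T.InteriorEdge e)
    (l1 l2 : T.V → 𝓛) (h1 : l1 ∈ T.consLabFull L) (h2 : l2 ∈ T.consLabFull L)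
    (hagree : l1 e = l2 e) :
    ∃ (h3 : T.mix e l1 l2 ∈ T.consLabFull L) (h4 : T.mix e l2 l1 ∈ T.consLabFull L),
      (X (⟨l1, h1⟩ : ↥(T.consLabFull L)) * X (⟨l2, h2⟩ : ↥(T.consLabFull L)) -
        X (⟨T.mix e l1 l2, h3⟩ : ↥(T.consLabFull L)) *
        X (⟨T.mix e l2 l1, h4⟩ : ↥(T.consLabFull L)))
        ∈ T.toricIdealFull L :=
  quad_mem_toricIdeal_general T L hL e l1 l2 h1 h2 hagree
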